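/- Let φ be analytic near 0 in ℂ^d with φ(0) = 0 and Im φ(x) ≥ 0 for x ∈ ℍ^d near 0. Let T ⊆ {1,…,d} be the set of indices j for which the j-th component of ∇φ(0) is zero. Then φ restricted to the span of the coordinate vectors e_j, j ∈ T, is identically zero; that is, φ(Σ_{j∈T} x_j e_j) ≡ 0. -/

import Mathlib

/-!
Restrict `φ` to the coordinates in `T` and take a direction `v` with nonnegative real coordinates.
Then `g z = φ (z • v)` has `g 0 = 0` and `g' 0 = 0`, and by continuity up to the boundary it maps
the upper half-plane into the closed upper half-plane. If `g` did not vanish identically it would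
be `zⁿ (c + o(1))` with `c ≠ 0` and `n ≥ 2`; since `zⁿ` takes every direction as `z` ranges over the
upper half-plane, `Im g` would become negative. So `φ ∘ T.indicator` vanishes at the small points
with positive real coordinates, and the one-variable identity theorem, applied one coordinate at a
time, extends this to a whole neighbourhood of `0`.
-/

open Complex Filter Topology Metric Set
open scoped ComplexOrder

open Real in
lemma exists_im_pos_im_pow_mul_neg {c : ℂ} (hc : c ≠ 0) {n : ℕ} (hn : 2 ≤ n) :
    ∃ u : ℂ, 0 < u.im ∧ (u ^ n * c).im < 0 := by
  have hn' : (2 : ℝ) ≤ n := by exact_mod_cast hn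
  obtain ⟨α, hα₀, hα₁, hαc₀, hαc₁⟩ : ∃ α : ℝ, 0 < α ∧ α < 2 * π ∧ π < α + arg c ∧
      α + arg c < 2 * π := by
    refine ⟨5 * π / 4 - 3 * arg c / 4, ?_, ?_, ?_, ?_⟩ <;>
      linarith [neg_pi_lt_arg c, arg_le_pi c, pi_pos]
  refine ⟨exp (↑(α / n) * I), ?_, ?_⟩
  · rw [exp_ofReal_mul_I_im]
    apply Real.sin_pos_of_pos_of_lt_pi (by positivity)
    rw [div_lt_iff₀ (by linarith)]
    nlinarith [pi_pos]
  · have hα : exp (↑(α / n) * I) ^ n * c = ‖c‖ * exp (↑(α + arg c) * I) := by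
      rw [← Complex.exp_nat_mul]
      nth_rw 1 [← norm_mul_exp_arg_mul_I c]
      rw [mul_left_comm, ← Complex.exp_add]
      congr 2
      have : (n : ℂ) ≠ 0 := by exact_mod_cast (by omega : n ≠ 0)
      push_cast
      field_simp
    rw [hα, im_ofReal_mul, exp_ofReal_mul_I_im, ← Real.sin_sub_two_pi]
    exact mul_neg_of_pos_of_neg (norm_pos_iff.2 hc)
      (Real.sin_neg_of_neg_of_neg_pi_lt (by linarith) (by linarith))

lemma AnalyticAt.eventually_eq_zero_of_deriv_eq_zero_of_im_nonneg {f : ℂ → ℂ}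
    (hf : AnalyticAt ℂ f 0) (hf0 : f 0 = 0) (hd : deriv f 0 = 0)
    (him : ∀ᶠ z in 𝓝 0, 0 < z.im → 0 ≤ (f z).im) : ∀ᶠ z in 𝓝 0, f z = 0 := by
  by_contra hne
  obtain ⟨n, g, hg, hg0, hfg⟩ := hf.exists_eventuallyEq_pow_smul_nonzero_iff.2 hne
  simp only [sub_zero, smul_eq_mul] at hfg
  have hn : 2 ≤ n := by
    have hn₀ : n ≠ 0 := by
      rintro rfl
      have h := hfg.self_of_nhds
      rw [hf0, pow_zero, one_mul] at h
      exact hg0 h.symm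
    have hn₁ : n ≠ 1 := by
      rintro rfl
      simp only [pow_one] at hfg
      have hgd : HasDerivAt (fun z => z * g z) (g 0) 0 := by
        simpa only [one_mul, zero_mul, add_zero] using
          (hasDerivAt_id' (0 : ℂ)).fun_mul hg.differentiableAt.hasDerivAt
      exact hg0 (by rw [← hgd.deriv, ← EventuallyEq.deriv_eq hfg, hd])
    omega
  obtain ⟨u, hu, hug⟩ := exists_im_pos_im_pow_mul_neg hg0 hn
  -- along the ray `r ↦ r u`, `Im f (r u) = rⁿ Im (uⁿ g (r u))` is eventually negative
  have hray : Tendsto (fun r : ℝ => (r : ℂ) * u) (𝓝[>] 0) (𝓝 0) := by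
    have : Continuous fun r : ℝ => (r : ℂ) * u := by fun_prop
    exact (this.tendsto' 0 0 (by simp)).mono_left nhdsWithin_le_nhds
  have hlim : Tendsto (fun r : ℝ => (u ^ n * g (r * u)).im) (𝓝[>] 0) (𝓝 (u ^ n * g 0).im) :=
    (continuous_im.tendsto _).comp ((hg.continuousAt.tendsto.comp hray).const_mul _)
  obtain ⟨r, hr, hfr, himr, hneg⟩ := (eventually_mem_nhdsWithin.and ((hray.eventually hfg).and
    ((hray.eventually him).and (hlim.eventually_lt_const hug)))).exists
  have hpos : 0 < ((r : ℂ) * u).im := by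
    rw [im_ofReal_mul]
    exact mul_pos hr hu
  have hfr' : (f (r * u)).im = r ^ n * (u ^ n * g (r * u)).im := by
    rw [hfr, mul_pow, ← ofReal_pow, mul_assoc, im_ofReal_mul]
  nlinarith [himr hpos, pow_pos (show (0 : ℝ) < r from hr) n]

lemma AnalyticOnNhd.eq_zero_of_fderiv_eq_zero_of_im_nonneg {E : Type*} [NormedAddCommGroup E]
    [NormedSpace ℂ E] {φ : E → ℂ} {U : Set E} {v : E} (hφ : AnalyticOnNhd ℂ φ U)
    (hU : Convex ℝ U) (h0 : 0 ∈ U) (hv : v ∈ U) (hφ0 : φ 0 = 0) (hd : fderiv ℂ φ 0 v = 0)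
    (him : ∀ᶠ z in 𝓝 (0 : ℂ), 0 < z.im → 0 ≤ (φ (z • v)).im) : φ v = 0 := by
  set L := {z : ℂ | z • v ∈ U}
  have hL : Convex ℝ L := fun z hz w hw a b ha hb hab => by
    simpa only [L, Set.mem_ofPred_eq, add_smul, smul_assoc] using hU hz hw ha hb hab
  have hg : AnalyticOnNhd ℂ (fun z : ℂ => φ (z • v)) L := fun z hz =>
    (hφ _ hz).comp_of_eq (analyticAt_id.smul analyticAt_const) rfl
  have hg' : HasDerivAt (fun z : ℂ => φ (z • v)) 0 0 := by
    have hφ' : HasFDerivAt φ (fderiv ℂ φ 0) ((0 : ℂ) • v) := by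
      simpa using (hφ 0 h0).differentiableAt.hasFDerivAt
    have hcomp := hφ'.comp_hasDerivAt (0 : ℂ) ((hasDerivAt_id' 0).smul_const v)
    rwa [one_smul, hd] at hcomp
  have hL0 : (0 : ℂ) ∈ L := by simpa [L] using h0
  have hzero := hg.eqOn_zero_of_preconnected_of_eventuallyEq_zero hL.isPreconnected hL0
    ((hg 0 hL0).eventually_eq_zero_of_deriv_eq_zero_of_im_nonneg (by simpa using hφ0)
      hg'.deriv him)
  simpa using hzero (show (1 : ℂ) ∈ L by simpa [L] using hv)

lemma Complex.im_mul_nonneg_of_nonneg {z w : ℂ} (hz : 0 ≤ z.im) (hw : 0 ≤ w) :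
    0 ≤ (z * w).im := by
  obtain ⟨hre, him⟩ := nonneg_iff.1 hw
  rw [mul_im, ← him, mul_zero, zero_add]
  exact mul_nonneg hz hre

lemma AnalyticOnNhd.eq_zero_of_nonneg_of_fderiv_eq_zero {ι : Type*} [Fintype ι]
    {φ : (ι → ℂ) → ℂ} {ρ : ℝ} (hφ : AnalyticOnNhd ℂ φ (ball 0 ρ)) (hφ0 : φ 0 = 0)
    (him : ∀ y ∈ ball 0 ρ, (∀ j, 0 ≤ (y j).im) → 0 ≤ (φ y).im) {v : ι → ℂ} (hv : v ∈ ball 0 ρ)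
    (hv0 : ∀ j, 0 ≤ v j) (hd : fderiv ℂ φ 0 v = 0) : φ v = 0 := by
  refine hφ.eq_zero_of_fderiv_eq_zero_of_im_nonneg (convex_ball 0 ρ)
    (mem_ball_self (pos_of_mem_ball hv)) hv hφ0 hd ?_
  filter_upwards [ball_mem_nhds (0 : ℂ) one_pos] with z hz hzim
  refine him _ ?_ fun j => im_mul_nonneg_of_nonneg hzim.le (hv0 j)
  rw [mem_ball_zero_iff, norm_smul]
  exact (mul_le_of_le_one_left (norm_nonneg _) (mem_ball_zero_iff.1 hz).le).trans_lt
    (mem_ball_zero_iff.1 hv)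

lemma AnalyticOnNhd.eqOn_zero_of_ofReal_eq_zero {E : Type*} [NormedAddCommGroup E]
    [NormedSpace ℂ E] {h : ℂ → E} {r : ℝ} (hh : AnalyticOnNhd ℂ h (ball 0 r))
    (hzero : ∀ t : ℝ, 0 < t → t < r → h t = 0) : EqOn h 0 (ball 0 r) := by
  rcases le_or_gt r 0 with hr | hr
  · simp [ball_eq_empty.2 hr]
  refine hh.eqOn_zero_of_preconnected_of_frequently_eq_zero (convex_ball 0 r).isPreconnected
    (mem_ball_self hr) ?_
  have hreal : Tendsto ((↑) : ℝ → ℂ) (𝓝[>] 0) (𝓝[≠] 0) := by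
    refine tendsto_nhdsWithin_iff.2 ⟨?_, ?_⟩
    · exact (continuous_ofReal.tendsto' 0 0 ofReal_zero).mono_left nhdsWithin_le_nhds
    · filter_upwards [eventually_mem_nhdsWithin] with t (ht : 0 < t)
      exact ofReal_ne_zero.2 ht.ne'
  refine hreal.frequently (Eventually.frequently ?_)
  filter_upwards [eventually_mem_nhdsWithin, Ioo_mem_nhdsGT hr] with t ht htr
  exact hzero t ht htr.2

lemma AnalyticOnNhd.eqOn_zero_of_forall_pos_eq_zero {ι E : Type*} [Fintype ι]
    [NormedAddCommGroup E] [NormedSpace ℂ E] {f : (ι → ℂ) → E} {r : ℝ}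
    (hf : AnalyticOnNhd ℂ f (ball 0 r)) (hzero : ∀ x ∈ ball 0 r, (∀ j, 0 < x j) → f x = 0) :
    EqOn f 0 (ball 0 r) := by
  classical
  suffices h : ∀ s : Finset ι, ∀ x ∈ ball 0 r, (∀ j ∉ s, 0 < x j) → f x = 0 from
    fun x hx => h Finset.univ x hx (by simp)
  intro s
  induction s using Finset.induction_on with
  | empty => simpa using hzero
  | insert i s hi ih =>
    intro x hx hpos
    have hr : 0 < r := pos_of_mem_ball hx
    have hupd : ∀ z ∈ ball (0 : ℂ) r, Function.update x i z ∈ ball 0 r := by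
      intro z hz
      rw [mem_ball_zero_iff, pi_norm_lt_iff hr] at hx ⊢
      intro j
      rcases eq_or_ne j i with rfl | hj
      · simpa using hz
      · simpa [hj] using hx j
    have hh : AnalyticOnNhd ℂ (fun z : ℂ => f (Function.update x i z)) (ball 0 r) := by
      refine fun z hz => (hf _ (hupd z hz)).comp_of_eq (AnalyticAt.pi fun j => ?_) rfl
      rcases eq_or_ne j i with rfl | hj
      · simp only [Function.update_self]
        exact analyticAt_id
      · simpa [hj] using analyticAt_const
    have hxi : x i ∈ ball (0 : ℂ) r :=
      mem_ball_zero_iff.2 ((norm_le_pi_norm x i).trans_lt (mem_ball_zero_iff.1 hx))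
    have hline := hh.eqOn_zero_of_ofReal_eq_zero (fun t ht htr => ih _
      (hupd t (by simpa [abs_of_pos ht] using htr)) fun j hj => ?_) hxi
    · simpa using hline
    rcases eq_or_ne j i with rfl | hji
    · simpa using ht
    · simpa [hji] using hpos j (by simp [hji, hj])

lemma ContinuousAt.im_nonneg_of_forall_im_pos {ι : Type*} {f : (ι → ℂ) → ℂ} {x : ι → ℂ}
    (hf : ContinuousAt f x) (h : ∀ᶠ y in 𝓝 x, (∀ j, 0 < (y j).im) → 0 ≤ (f y).im)
    (hx : ∀ j, 0 ≤ (x j).im) : 0 ≤ (f x).im := by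
  have hshift : Tendsto (fun δ : ℝ => x + fun _ => (δ : ℂ) * I) (𝓝[>] 0) (𝓝 x) := by
    have : Continuous fun δ : ℝ => x + fun _ => (δ : ℂ) * I := by fun_prop
    exact (this.tendsto' 0 x (by simp [Pi.zero_def])).mono_left nhdsWithin_le_nhds
  refine ge_of_tendsto ((continuous_im.tendsto _).comp (hf.tendsto.comp hshift)) ?_
  filter_upwards [hshift.eventually h, eventually_mem_nhdsWithin] with δ hδ (hδpos : 0 < δ)
  exact hδ fun j => by simpa using add_pos_of_nonneg_of_pos (hx j) hδpos

lemma map_indicator_eq_zero {ι R M F : Type*} [Fintype ι] [DecidableEq ι] [Semiring R]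
    [AddCommMonoid M] [Module R M] [FunLike F (ι → R) M] [LinearMapClass F R (ι → R) M] (L : F)
    {T : Set ι} (hT : ∀ j ∈ T, L (Pi.single j 1) = 0) (x : ι → R) : L (T.indicator x) = 0 := by
  rw [← Finset.univ_sum_single (T.indicator x), map_sum]
  refine Finset.sum_eq_zero fun j _ => ?_
  by_cases hj : j ∈ T
  · rw [← mul_one (T.indicator x j), ← smul_eq_mul, Pi.single_smul', map_smul, hT j hj, smul_zero]
  · rw [indicator_of_notMem hj, Pi.single_zero, map_zero]

lemma pi_norm_indicator_le {ι E : Type*} [Fintype ι] [SeminormedAddCommGroup E] (T : Set ι)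
    (x : ι → E) : ‖T.indicator x‖ ≤ ‖x‖ :=
  (pi_norm_le_iff_of_nonneg (norm_nonneg x)).2 fun j =>
    (norm_indicator_le_norm_self x j).trans (norm_le_pi_norm x j)

lemma analyticAt_indicator {𝕜 ι E : Type*} [NontriviallyNormedField 𝕜] [Fintype ι]
    [NormedAddCommGroup E] [NormedSpace 𝕜 E] (T : Set ι) (x : ι → E) :
    AnalyticAt 𝕜 (fun y : ι → E => T.indicator y) x := by
  refine AnalyticAt.pi fun j => ?_
  by_cases hj : j ∈ T
  · simp only [indicator_of_mem hj]
    exact (ContinuousLinearMap.proj (R := 𝕜) j).analyticAt x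
  · simpa [hj] using analyticAt_const

/-- If `φ` is analytic at `0`, `φ 0 = 0`, and `φ` maps small points of `ℍ^d`
into the closed upper half-plane, then `φ` vanishes identically on the span of
the coordinate directions in which the gradient of `φ` at `0` vanishes. -/
theorem stmt_4 (d : ℕ) (φ : (Fin d → ℂ) → ℂ) (hφ : AnalyticAt ℂ φ 0)
    (h0 : φ 0 = 0)
    (hmap : ∃ ε > 0, ∀ x : Fin d → ℂ,
      (∀ j, 0 < (x j).im) → (∀ j, ‖x j‖ < ε) → 0 ≤ (φ x).im)
    (T : Set (Fin d))
    (hT : ∀ j, j ∈ T ↔ fderiv ℂ φ 0 (Pi.single j 1) = 0) :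
    ∃ ε > 0, ∀ x : Fin d → ℂ, (∀ j, ‖x j‖ < ε) →
      φ (T.indicator x) = 0 := by
  obtain ⟨ε, hε, hmap⟩ := hmap
  obtain ⟨r, hr, han⟩ := Metric.eventually_nhds_iff_ball.1 hφ.eventually_analyticAt
  set ρ := min r ε
  have hρ : 0 < ρ := lt_min hr hε
  have hanρ : AnalyticOnNhd ℂ φ (ball 0 ρ) := fun y hy =>
    han y (ball_subset_ball (min_le_left _ _) hy)
  have hclosed : ∀ y ∈ ball (0 : Fin d → ℂ) ρ, (∀ j, 0 ≤ (y j).im) → 0 ≤ (φ y).im := by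
    intro y hy hy'
    refine (hanρ y hy).continuousAt.im_nonneg_of_forall_im_pos ?_ hy'
    filter_upwards [isOpen_ball.mem_nhds (ball_subset_ball (min_le_right _ _) hy)] with z hz
    exact fun hzim => hmap z hzim fun j => (norm_le_pi_norm z j).trans_lt (mem_ball_zero_iff.1 hz)
  have hind : ∀ x ∈ ball (0 : Fin d → ℂ) ρ, T.indicator x ∈ ball 0 ρ := fun x hx =>
    mem_ball_zero_iff.2 ((pi_norm_indicator_le T x).trans_lt (mem_ball_zero_iff.1 hx))
  have hψ : AnalyticOnNhd ℂ (fun x => φ (T.indicator x)) (ball 0 ρ) := fun x hx =>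
    (hanρ _ (hind x hx)).comp_of_eq (analyticAt_indicator T x) rfl
  refine ⟨ρ, hρ, fun x hx => hψ.eqOn_zero_of_forall_pos_eq_zero (fun y hy hypos => ?_)
    (mem_ball_zero_iff.2 ((pi_norm_lt_iff hρ).2 hx))⟩
  exact hanρ.eq_zero_of_nonneg_of_fderiv_eq_zero h0 hclosed (hind y hy)
    (indicator_nonneg fun j _ => (hypos j).le) (map_indicator_eq_zero _ (fun j hj => (hT j).1 hj) y)
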